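/- Assume w is quasi-definite. For k ≥ 0 and z ≠ 0 define the 2N×2N Szegő matrix in N×N blocks R_k(z) := [[I + α^L_{1,k+1}(α^R_{2,k})† z^{−1}, −α^L_{1,k+1} H^R_k z^{−1}], [−(H^R_k)^{−1}(α^R_{2,k})† z^{−1}, z^{−1} I]]. Then for every n ≥ 1 and every z ∈ ℂ with z ≠ 0 and |z| ≠ 1, the 2N×2N block matrix Y_n(z) := [[P^L_{1,n}(z), Q^L_{1,n}(z)], [−(H^R_{n−1})^{−1} P̃^R_{2,n−1}(z), −(H^R_{n−1})^{−1} Q^R_{2,n−1}(z)]] satisfies the transfer-matrix formula Y_n(z) = R_{n−1}(z)·R_{n−2}(z)···R_0(z)·[[z^n I, ∮ w(ζ)(1 − ζ^{−1}z)^{−1} dm(ζ)], [0, I]]. -/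

import Mathlib

open Complex Matrix

noncomputable section

/-- Normalized matrix-valued integral over the unit circle:
`∮ f(ζ) dm(ζ) := (2π)⁻¹ ∫₀^{2π} f(e^{iθ}) dθ`, taken entrywise. -/
def circInt (N : ℕ) (f : ℂ → Matrix (Fin N) (Fin N) ℂ) : Matrix (Fin N) (Fin N) ℂ :=
  Matrix.of fun i j =>
    (2 * Real.pi)⁻¹ • ∫ θ in (0:ℝ)..(2 * Real.pi), f (Complex.exp (θ * Complex.I)) i j

/-- Evaluation at `z` of the matrix polynomial with coefficients `c 0, …, c n`. -/
def mPolyEval {N : ℕ} (c : ℕ → Matrix (Fin N) (Fin N) ℂ) (n : ℕ) (z : ℂ) :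
    Matrix (Fin N) (Fin N) ℂ :=
  ∑ k ∈ Finset.range (n + 1), z ^ k • c k

/-- Evaluation at `z` of the reciprocal polynomial `P̃(z) = ∑_{k=0}^n (c (n-k))ᴴ z^k`. -/
def mRecipEval {N : ℕ} (c : ℕ → Matrix (Fin N) (Fin N) ℂ) (n : ℕ) (z : ℂ) :
    Matrix (Fin N) (Fin N) ℂ :=
  ∑ k ∈ Finset.range (n + 1), z ^ k • (c (n - k))ᴴ

/-- The `j`-th moment `μ̂ j = ∮ w(ζ) ζ^{-j} dm(ζ)` of the matrix weight `w`. -/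
def mMoment (N : ℕ) (w : ℂ → Matrix (Fin N) (Fin N) ℂ) (j : ℤ) : Matrix (Fin N) (Fin N) ℂ :=
  circInt N fun ζ => ζ ^ (-j) • w ζ

/-- Quasi-definiteness: all the truncated block Toeplitz moment matrices
`M^L_[n]` and `M^R_[n]` are invertible. -/
def QuasiDef (N : ℕ) (w : ℂ → Matrix (Fin N) (Fin N) ℂ) : Prop :=
  ∀ n : ℕ, 1 ≤ n →
    IsUnit (Matrix.of fun p q : Fin n × Fin N =>
      mMoment N w ((p.1 : ℤ) - (q.1 : ℤ)) p.2 q.2) ∧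
    IsUnit (Matrix.of fun p q : Fin n × Fin N =>
      mMoment N w ((q.1 : ℤ) - (p.1 : ℤ)) p.2 q.2)

/-- `P n` lists the coefficients of the monic degree-`n` Szegő polynomial `P^L_{1,n}`:
monicity together with `∮ P^L_{1,n}(ζ) w(ζ) ζ^{-j} dm(ζ) = 0` for `j = 0,…,n-1`. -/
def IsSzPL1 (N : ℕ) (w : ℂ → Matrix (Fin N) (Fin N) ℂ)
    (P : ℕ → ℕ → Matrix (Fin N) (Fin N) ℂ) : Prop :=
  ∀ n : ℕ, P n n = 1 ∧ (∀ k, n < k → P n k = 0) ∧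
    ∀ j < n, circInt N (fun ζ => ζ ^ (-(j : ℤ)) • (mPolyEval (P n) n ζ * w ζ)) = 0

/-- `P n` lists the coefficients of the monic degree-`n` Szegő polynomial `P^R_{1,n}`:
monicity together with `∮ ζ^{-j} w(ζ) P^R_{1,n}(ζ) dm(ζ) = 0` for `j = 0,…,n-1`. -/
def IsSzPR1 (N : ℕ) (w : ℂ → Matrix (Fin N) (Fin N) ℂ)
    (P : ℕ → ℕ → Matrix (Fin N) (Fin N) ℂ) : Prop :=
  ∀ n : ℕ, P n n = 1 ∧ (∀ k, n < k → P n k = 0) ∧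
    ∀ j < n, circInt N (fun ζ => ζ ^ (-(j : ℤ)) • (w ζ * mPolyEval (P n) n ζ)) = 0

/-- `P n` lists the coefficients of the monic degree-`n` Szegő polynomial `P^L_{2,n}`:
monicity together with `∮ ζ^{j} w(ζ) (P^L_{2,n}(ζ))† dm(ζ) = 0` for `j = 0,…,n-1`. -/
def IsSzPL2 (N : ℕ) (w : ℂ → Matrix (Fin N) (Fin N) ℂ)
    (P : ℕ → ℕ → Matrix (Fin N) (Fin N) ℂ) : Prop :=
  ∀ n : ℕ, P n n = 1 ∧ (∀ k, n < k → P n k = 0) ∧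
    ∀ j < n, circInt N (fun ζ => ζ ^ j • (w ζ * (mPolyEval (P n) n ζ)ᴴ)) = 0

/-- `P n` lists the coefficients of the monic degree-`n` Szegő polynomial `P^R_{2,n}`:
monicity together with `∮ (P^R_{2,n}(ζ))† w(ζ) ζ^{j} dm(ζ) = 0` for `j = 0,…,n-1`. -/
def IsSzPR2 (N : ℕ) (w : ℂ → Matrix (Fin N) (Fin N) ℂ)
    (P : ℕ → ℕ → Matrix (Fin N) (Fin N) ℂ) : Prop :=
  ∀ n : ℕ, P n n = 1 ∧ (∀ k, n < k → P n k = 0) ∧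
    ∀ j < n, circInt N (fun ζ => ζ ^ j • ((mPolyEval (P n) n ζ)ᴴ * w ζ)) = 0

/-- The Verblunsky matrix of the family `P`: the value at `0` of its `n`-th member. -/
def szVer {N : ℕ} (P : ℕ → ℕ → Matrix (Fin N) (Fin N) ℂ) (n : ℕ) :
    Matrix (Fin N) (Fin N) ℂ :=
  mPolyEval (P n) n 0

/-- Quasi-tau matrix `H^L_n = ∮ P^L_{1,n}(ζ) w(ζ) ζ^{-n} dm(ζ)` (from the family `P^L_{1,·}`). -/
def szHL (N : ℕ) (w : ℂ → Matrix (Fin N) (Fin N) ℂ)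
    (P : ℕ → ℕ → Matrix (Fin N) (Fin N) ℂ) (n : ℕ) : Matrix (Fin N) (Fin N) ℂ :=
  circInt N fun ζ => ζ ^ (-(n : ℤ)) • (mPolyEval (P n) n ζ * w ζ)

/-- Quasi-tau matrix `H^R_n = ∮ ζ^{-n} w(ζ) P^R_{1,n}(ζ) dm(ζ)` (from the family `P^R_{1,·}`). -/
def szHR (N : ℕ) (w : ℂ → Matrix (Fin N) (Fin N) ℂ)
    (P : ℕ → ℕ → Matrix (Fin N) (Fin N) ℂ) (n : ℕ) : Matrix (Fin N) (Fin N) ℂ :=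
  circInt N fun ζ => ζ ^ (-(n : ℤ)) • (w ζ * mPolyEval (P n) n ζ)

/-- Cauchy transform `Q^L_{1,n}(z) = ∮ ζ^{-n} P^L_{1,n}(ζ) w(ζ) (1-ζ^{-1}z)^{-1} dm(ζ)`. -/
def szQL1 (N : ℕ) (w : ℂ → Matrix (Fin N) (Fin N) ℂ)
    (P : ℕ → ℕ → Matrix (Fin N) (Fin N) ℂ) (n : ℕ) (z : ℂ) : Matrix (Fin N) (Fin N) ℂ :=
  circInt N fun ζ => (ζ ^ (-(n : ℤ)) * (1 - ζ⁻¹ * z)⁻¹) • (mPolyEval (P n) n ζ * w ζ)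

/-- Cauchy transform `Q^R_{2,n}(z) = ∮ ζ^{-(n+1)} P̃^R_{2,n}(ζ) w(ζ) (1-ζ^{-1}z)^{-1} dm(ζ)`. -/
def szQR2 (N : ℕ) (w : ℂ → Matrix (Fin N) (Fin N) ℂ)
    (P : ℕ → ℕ → Matrix (Fin N) (Fin N) ℂ) (n : ℕ) (z : ℂ) : Matrix (Fin N) (Fin N) ℂ :=
  circInt N fun ζ => (ζ ^ (-((n : ℤ) + 1)) * (1 - ζ⁻¹ * z)⁻¹) • (mRecipEval (P n) n ζ * w ζ)

/-!
Quasi-definiteness says that a matrix polynomial supported on `n` consecutive powers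
`ζ^s, …, ζ^(s+n-1)` and orthogonal (against `w`) to the same powers vanishes: its pairings are its
coefficients times the invertible block Toeplitz matrix `M^R_[n]`; dually `M^L_[m+1]` makes `H^R_m`
invertible. Applied to the difference of the two sides this gives the Szegő recursions
`P^L_{1,m+1}(z) = z P^L_{1,m}(z) + α^L_{1,m+1} P̃^R_{2,m}(z)` and
`P̃^R_{2,m+1}(z) = (α^R_{2,m+1})† P^L_{1,m+1}(z) + H^R_{m+1} (H^R_m)⁻¹ P̃^R_{2,m}(z)`,
the constant `H^R_{m+1}` being forced by `∮ P̃^R_{2,m} w dm = H^R_m`. Integrating them against the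
Cauchy kernel, with `z ζ⁻¹ (1 - ζ⁻¹ z)⁻¹ = (1 - ζ⁻¹ z)⁻¹ - 1` and `∮ ζ^(-m) P̃^R_{2,m} w dm = 0`
for `m ≥ 1`, gives `Q^L_{1,m+1} = Q^L_{1,m} + α^L_{1,m+1} Q^R_{2,m}` and
`z Q^R_{2,m+1} = (α^R_{2,m+1})† Q^L_{1,m+1} + H^R_{m+1} (H^R_m)⁻¹ Q^R_{2,m}`.
These four identities say `Y_{n+1}(z) = R_n(z) Y_n(z) diag(z, 1)`, and `Y_1(z)` is `R_0(z)` times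
the initial matrix for `n = 1`, so the formula follows by induction on `n`.
-/

section CircleIntegral

variable {N : ℕ}

lemma circInt_congr {f g : ℂ → Matrix (Fin N) (Fin N) ℂ}
    (h : ∀ θ : ℝ, f (exp (θ * I)) = g (exp (θ * I))) : circInt N f = circInt N g := by
  simp only [circInt, h]

lemma circInt_smul (c : ℂ) (f : ℂ → Matrix (Fin N) (Fin N) ℂ) :
    circInt N (fun ζ => c • f ζ) = c • circInt N f := by
  ext i j
  simp only [circInt, Matrix.of_apply, Matrix.smul_apply, smul_eq_mul,
    intervalIntegral.integral_const_mul, mul_smul_comm]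

lemma circInt_sum {ι : Type*} (s : Finset ι) {f : ι → ℂ → Matrix (Fin N) (Fin N) ℂ}
    (hf : ∀ i ∈ s, Continuous fun θ : ℝ => f i (exp (θ * I))) :
    circInt N (fun ζ => ∑ i ∈ s, f i ζ) = ∑ i ∈ s, circInt N (f i) := by
  ext p q
  simp only [circInt, Matrix.of_apply, Matrix.sum_apply, ← Finset.smul_sum]
  rw [intervalIntegral.integral_finsetSum fun i hi =>
    ((hf i hi).matrix_elem p q).intervalIntegrable _ _]

lemma circInt_add {f g : ℂ → Matrix (Fin N) (Fin N) ℂ}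
    (hf : Continuous fun θ : ℝ => f (exp (θ * I))) (hg : Continuous fun θ : ℝ => g (exp (θ * I))) :
    circInt N (fun ζ => f ζ + g ζ) = circInt N f + circInt N g := by
  ext p q
  simp only [circInt, Matrix.of_apply, Matrix.add_apply, ← smul_add]
  rw [intervalIntegral.integral_add ((hf.matrix_elem p q).intervalIntegrable _ _)
    ((hg.matrix_elem p q).intervalIntegrable _ _)]

lemma circInt_sub {f g : ℂ → Matrix (Fin N) (Fin N) ℂ}
    (hf : Continuous fun θ : ℝ => f (exp (θ * I))) (hg : Continuous fun θ : ℝ => g (exp (θ * I))) :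
    circInt N (fun ζ => f ζ - g ζ) = circInt N f - circInt N g := by
  ext p q
  simp only [circInt, Matrix.of_apply, Matrix.sub_apply, ← smul_sub]
  rw [intervalIntegral.integral_sub ((hf.matrix_elem p q).intervalIntegrable _ _)
    ((hg.matrix_elem p q).intervalIntegrable _ _)]

lemma circInt_mul_left (A : Matrix (Fin N) (Fin N) ℂ) {f : ℂ → Matrix (Fin N) (Fin N) ℂ}
    (hf : Continuous fun θ : ℝ => f (exp (θ * I))) :
    circInt N (fun ζ => A * f ζ) = A * circInt N f := by
  ext p q
  simp only [circInt, Matrix.of_apply, Matrix.mul_apply, mul_smul_comm]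
  rw [intervalIntegral.integral_finsetSum (f := fun l θ => A p l * f (exp (θ * I)) l q)
    fun l _ => (continuous_const.mul (hf.matrix_elem l q)).intervalIntegrable _ _,
    Finset.smul_sum]
  simp only [intervalIntegral.integral_const_mul]

lemma circInt_mul_right (A : Matrix (Fin N) (Fin N) ℂ) {f : ℂ → Matrix (Fin N) (Fin N) ℂ}
    (hf : Continuous fun θ : ℝ => f (exp (θ * I))) :
    circInt N (fun ζ => f ζ * A) = circInt N f * A := by
  ext p q
  simp only [circInt, Matrix.of_apply, Matrix.mul_apply, smul_mul_assoc]
  rw [intervalIntegral.integral_finsetSum (f := fun l θ => f (exp (θ * I)) p l * A l q)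
    fun l _ => ((hf.matrix_elem p l).mul continuous_const).intervalIntegrable _ _,
    Finset.smul_sum]
  simp only [intervalIntegral.integral_mul_const]

end CircleIntegral

lemma conj_exp_mul_I (θ : ℝ) : (starRingEnd ℂ) (exp (θ * I)) = (exp (θ * I))⁻¹ := by
  rw [← exp_conj, ← exp_neg, map_mul, conj_ofReal, conj_I, mul_neg]

lemma pow_mul_zpow_neg {ζ : ℂ} (hζ : ζ ≠ 0) (k : ℕ) (j : ℤ) :
    ζ ^ k * ζ ^ (-j) = ζ ^ (-(j - k)) := by
  rw [← zpow_natCast, ← zpow_add₀ hζ]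
  ring_nf

lemma zpow_neg_add_one_mul_self {ζ : ℂ} (hζ : ζ ≠ 0) (j : ℤ) :
    ζ ^ (-(j + 1)) * ζ = ζ ^ (-j) := by
  rw [← zpow_add_one₀ hζ]
  ring_nf

@[fun_prop]
lemma continuous_exp_mul_I_zpow (j : ℤ) : Continuous fun θ : ℝ => exp (θ * I) ^ j :=
  (by fun_prop : Continuous fun θ : ℝ => exp (θ * I)).zpow₀ j fun _ => Or.inl (exp_ne_zero _)

lemma one_sub_inv_mul_ne_zero {z : ℂ} (hz : ‖z‖ ≠ 1) (θ : ℝ) :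
    1 - (exp (θ * I))⁻¹ * z ≠ 0 := by
  rw [sub_ne_zero, ne_comm, Ne, inv_mul_eq_one₀ (exp_ne_zero _)]
  rintro rfl
  exact hz (norm_exp_ofReal_mul_I θ)

lemma continuous_cauchyKernel {z : ℂ} (hz : ‖z‖ ≠ 1) :
    Continuous fun θ : ℝ => (1 - (exp (θ * I))⁻¹ * z)⁻¹ :=
  Continuous.inv₀ (by fun_prop (disch := exact fun _ => exp_ne_zero _))
    (one_sub_inv_mul_ne_zero hz)

lemma mul_zpow_mul_cauchyKernel {ζ z : ℂ} (hζ : ζ ≠ 0) (hk : 1 - ζ⁻¹ * z ≠ 0) (j : ℤ) :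
    z * (ζ ^ (-(j + 1)) * (1 - ζ⁻¹ * z)⁻¹) = ζ ^ (-j) * (1 - ζ⁻¹ * z)⁻¹ - ζ ^ (-j) := by
  rw [neg_add, zpow_add₀ hζ, _root_.zpow_neg_one]
  linear_combination (-ζ ^ (-j)) * mul_inv_cancel₀ hk

section MatrixPolynomial

variable {N : ℕ}

@[fun_prop]
lemma continuous_mPolyEval (c : ℕ → Matrix (Fin N) (Fin N) ℂ) (n : ℕ) :
    Continuous (mPolyEval c n) := by
  unfold mPolyEval
  fun_prop

@[fun_prop]
lemma continuous_mRecipEval (c : ℕ → Matrix (Fin N) (Fin N) ℂ) (n : ℕ) :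
    Continuous (mRecipEval c n) := by
  unfold mRecipEval
  fun_prop

lemma szVer_eq (P : ℕ → ℕ → Matrix (Fin N) (Fin N) ℂ) (n : ℕ) : szVer P n = P n 0 := by
  simp [szVer, mPolyEval, Finset.sum_range_succ']

lemma mPolyEval_sub (c d : ℕ → Matrix (Fin N) (Fin N) ℂ) (n : ℕ) (z : ℂ) :
    mPolyEval (fun k => c k - d k) n z = mPolyEval c n z - mPolyEval d n z := by
  simp only [mPolyEval, smul_sub, Finset.sum_sub_distrib]

lemma mPolyEval_mul_left (A : Matrix (Fin N) (Fin N) ℂ) (c : ℕ → Matrix (Fin N) (Fin N) ℂ)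
    (n : ℕ) (z : ℂ) : mPolyEval (fun k => A * c k) n z = A * mPolyEval c n z := by
  simp only [mPolyEval, Finset.mul_sum, mul_smul_comm]

lemma smul_mPolyEval (c : ℕ → Matrix (Fin N) (Fin N) ℂ) (n : ℕ) (z : ℂ) :
    z • mPolyEval c n z = mPolyEval (fun k => if k = 0 then 0 else c (k - 1)) (n + 1) z := by
  simp [mPolyEval, Finset.sum_range_succ' _ (n + 1), Finset.smul_sum, smul_smul, pow_succ']

lemma mRecipEval_eq_mPolyEval_succ (c : ℕ → Matrix (Fin N) (Fin N) ℂ) (n : ℕ) (z : ℂ) :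
    mRecipEval c n z = mPolyEval (fun k => if k ≤ n then (c (n - k))ᴴ else 0) (n + 1) z := by
  rw [mPolyEval, Finset.sum_range_succ, if_neg n.not_succ_le_self, smul_zero, add_zero]
  exact Finset.sum_congr rfl fun k hk => by
    rw [if_pos (Nat.lt_succ_iff.mp (Finset.mem_range.mp hk))]

lemma mRecipEval_exp_mul_I (c : ℕ → Matrix (Fin N) (Fin N) ℂ) (n : ℕ) (θ : ℝ) :
    mRecipEval c n (exp (θ * I)) = exp (θ * I) ^ n • (mPolyEval c n (exp (θ * I)))ᴴ := by
  simp only [mRecipEval, mPolyEval, conjTranspose_sum, conjTranspose_smul, Finset.smul_sum,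
    smul_smul, star_def, map_pow, conj_exp_mul_I]
  rw [← Finset.sum_range_reflect]
  refine Finset.sum_congr rfl fun k hk => ?_
  have hk : k ≤ n := Nat.lt_succ_iff.mp (Finset.mem_range.mp hk)
  rw [Nat.add_sub_cancel, Nat.sub_sub_self hk, inv_pow,
    ← Nat.sub_add_cancel hk, pow_add, Nat.sub_add_cancel hk,
    mul_inv_cancel_right₀ (pow_ne_zero _ (exp_ne_zero _))]

end MatrixPolynomial

section Moments

variable {N : ℕ}

lemma circInt_mPolyEval_mul (c : ℕ → Matrix (Fin N) (Fin N) ℂ) (n : ℕ)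
    {G : ℂ → Matrix (Fin N) (Fin N) ℂ} (hG : Continuous fun θ : ℝ => G (exp (θ * I))) :
    circInt N (fun ζ => mPolyEval c n ζ * G ζ) =
      ∑ k ∈ Finset.range (n + 1), c k * circInt N (fun ζ => ζ ^ k • G ζ) := by
  have hkG (k : ℕ) : Continuous fun θ : ℝ => exp (θ * I) ^ k • G (exp (θ * I)) :=
    (by fun_prop : Continuous fun θ : ℝ => exp (θ * I) ^ k).smul hG
  simp only [mPolyEval, Finset.sum_mul, smul_mul_assoc, ← mul_smul_comm]
  rw [circInt_sum _ fun k _ => continuous_const.mul (hkG k)]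
  exact Finset.sum_congr rfl fun k _ => circInt_mul_left _ (hkG k)

lemma circInt_mul_mPolyEval (c : ℕ → Matrix (Fin N) (Fin N) ℂ) (n : ℕ)
    {G : ℂ → Matrix (Fin N) (Fin N) ℂ} (hG : Continuous fun θ : ℝ => G (exp (θ * I))) :
    circInt N (fun ζ => G ζ * mPolyEval c n ζ) =
      ∑ k ∈ Finset.range (n + 1), circInt N (fun ζ => ζ ^ k • G ζ) * c k := by
  have hkG (k : ℕ) : Continuous fun θ : ℝ => exp (θ * I) ^ k • G (exp (θ * I)) :=
    (by fun_prop : Continuous fun θ : ℝ => exp (θ * I) ^ k).smul hG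
  simp only [mPolyEval, Finset.mul_sum, mul_smul_comm, ← smul_mul_assoc]
  rw [circInt_sum _ fun k _ => (hkG k).mul continuous_const]
  exact Finset.sum_congr rfl fun k _ => circInt_mul_right _ (hkG k)

lemma circInt_conjTranspose_mPolyEval_mul (c : ℕ → Matrix (Fin N) (Fin N) ℂ) (n : ℕ)
    {G : ℂ → Matrix (Fin N) (Fin N) ℂ} (hG : Continuous fun θ : ℝ => G (exp (θ * I))) :
    circInt N (fun ζ => (mPolyEval c n ζ)ᴴ * G ζ) =
      ∑ k ∈ Finset.range (n + 1), (c k)ᴴ * circInt N (fun ζ => ζ ^ (-(k : ℤ)) • G ζ) := by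
  rw [circInt_congr (g := fun ζ =>
      ∑ k ∈ Finset.range (n + 1), (c k)ᴴ * (ζ ^ (-(k : ℤ)) • G ζ)) fun θ => by
    simp only [mPolyEval, conjTranspose_sum, conjTranspose_smul, star_def, map_pow,
      conj_exp_mul_I, Finset.sum_mul, smul_mul_assoc, mul_smul_comm, _root_.zpow_neg,
      zpow_natCast, inv_pow]]
  have hkG (k : ℕ) : Continuous fun θ : ℝ => exp (θ * I) ^ (-(k : ℤ)) • G (exp (θ * I)) :=
    (continuous_exp_mul_I_zpow _).smul hG
  rw [circInt_sum _ fun k _ => continuous_const.mul (hkG k)]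
  exact Finset.sum_congr rfl fun k _ => circInt_mul_left _ (hkG k)

lemma circInt_zpow_mPolyEval_mul {w : ℂ → Matrix (Fin N) (Fin N) ℂ} (hw : Continuous w)
    (c : ℕ → Matrix (Fin N) (Fin N) ℂ) (n : ℕ) (j : ℤ) :
    circInt N (fun ζ => ζ ^ (-j) • (mPolyEval c n ζ * w ζ)) =
      ∑ k ∈ Finset.range (n + 1), c k * mMoment N w (j - k) := by
  simp only [← mul_smul_comm]
  rw [circInt_mPolyEval_mul c n (by fun_prop)]
  refine Finset.sum_congr rfl fun k _ => congrArg _ (circInt_congr fun θ => ?_)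
  rw [smul_smul, pow_mul_zpow_neg (exp_ne_zero _)]

lemma circInt_zpow_mul_mPolyEval {w : ℂ → Matrix (Fin N) (Fin N) ℂ} (hw : Continuous w)
    (c : ℕ → Matrix (Fin N) (Fin N) ℂ) (n : ℕ) (j : ℤ) :
    circInt N (fun ζ => ζ ^ (-j) • (w ζ * mPolyEval c n ζ)) =
      ∑ k ∈ Finset.range (n + 1), mMoment N w (j - k) * c k := by
  simp only [← smul_mul_assoc]
  rw [circInt_mul_mPolyEval c n (by fun_prop)]
  refine Finset.sum_congr rfl fun k _ => congrArg (· * c k) (circInt_congr fun θ => ?_)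
  rw [smul_smul, pow_mul_zpow_neg (exp_ne_zero _)]

end Moments

section QuasiDefinite

variable {N : ℕ} {w : ℂ → Matrix (Fin N) (Fin N) ℂ}

lemma eq_zero_of_sum_mMoment_mulVec_eq_zero (hqd : QuasiDef N w) {n : ℕ} {v : ℕ → Fin N → ℂ}
    (h : ∀ j < n, ∑ i ∈ Finset.range n, mMoment N w (j - i) *ᵥ v i = 0) :
    ∀ i < n, v i = 0 := by
  rcases Nat.eq_zero_or_pos n with rfl | hn
  · simp
  set M := Matrix.of fun p q : Fin n × Fin N => mMoment N w ((p.1 : ℤ) - q.1) p.2 q.2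
  have hM : M *ᵥ (fun p => v p.1 p.2) = M *ᵥ 0 := by
    ext p
    have hp := congrFun (h p.1 p.1.isLt) p.2
    rw [← Fin.sum_univ_eq_sum_range (fun i => mMoment N w (p.1 - i) *ᵥ v i)] at hp
    simpa [M, mulVec, dotProduct, Fintype.sum_prod_type, Finset.sum_apply] using hp
  have hv := mulVec_injective_iff_isUnit.mpr (hqd n hn).1 hM
  intro i hi
  ext b
  exact congrFun hv (⟨i, hi⟩, b)

lemma eq_zero_of_sum_mul_mMoment_eq_zero (hqd : QuasiDef N w) {n : ℕ}
    {e : ℕ → Matrix (Fin N) (Fin N) ℂ}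
    (h : ∀ j < n, ∑ i ∈ Finset.range n, e i * mMoment N w (j - i) = 0) :
    ∀ i < n, e i = 0 := by
  rcases Nat.eq_zero_or_pos n with rfl | hn
  · simp
  set M := Matrix.of fun p q : Fin n × Fin N => mMoment N w ((q.1 : ℤ) - p.1) p.2 q.2
  have hrow (r : Fin N) : (fun p : Fin n × Fin N => e p.1 r p.2) ᵥ* M = 0 ᵥ* M := by
    ext q
    have hq := congrFun (congrFun (h q.1 q.1.isLt) r) q.2
    rw [← Fin.sum_univ_eq_sum_range (fun i => e i * mMoment N w (q.1 - i))] at hq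
    simpa [M, vecMul, dotProduct, Fintype.sum_prod_type, Matrix.sum_apply, Matrix.mul_apply]
      using hq
  intro i hi
  ext r b
  exact congrFun (vecMul_injective_iff_isUnit.mpr (hqd n hn).2 (hrow r)) (⟨i, hi⟩, b)

lemma mPolyEval_eq_zero_of_orthogonal (hw : Continuous w) (hqd : QuasiDef N w)
    {d : ℕ → Matrix (Fin N) (Fin N) ℂ} {s n : ℕ} (hlow : ∀ k < s, d k = 0) (htop : d (s + n) = 0)
    (horth : ∀ j < n,
      circInt N (fun ζ => ζ ^ (-((s + j : ℕ) : ℤ)) • (mPolyEval d (s + n) ζ * w ζ)) = 0)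
    (z : ℂ) : mPolyEval d (s + n) z = 0 := by
  have hmid : ∀ i < n, d (s + i) = 0 := eq_zero_of_sum_mul_mMoment_eq_zero hqd fun j hj => by
    have h := horth j hj
    rw [circInt_zpow_mPolyEval_mul hw, Finset.sum_range_succ, htop, zero_mul, add_zero,
      Finset.sum_range_add, Finset.sum_eq_zero (s := Finset.range s) fun k hk => by
        rw [hlow k (Finset.mem_range.mp hk), zero_mul], zero_add] at h
    rw [← h]
    refine Finset.sum_congr rfl fun i _ => ?_
    congr 2
    push_cast
    ring
  refine Finset.sum_eq_zero fun k hk => ?_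
  rcases lt_or_ge k s with hks | hks
  · rw [hlow k hks, smul_zero]
  obtain ⟨i, rfl⟩ := Nat.exists_eq_add_of_le hks
  rcases lt_or_ge i n with hin | hin
  · rw [hmid i hin, smul_zero]
  · rw [show i = n by have := Finset.mem_range.mp hk; omega, htop, smul_zero]

end QuasiDefinite

section Szego

variable {N : ℕ} {w : ℂ → Matrix (Fin N) (Fin N) ℂ}
  {PL1 PR1 PR2 : ℕ → ℕ → Matrix (Fin N) (Fin N) ℂ}

/-- Both sides equal `∮ P^R_{2,m}(ζ)ᴴ w(ζ) P^R_{1,m}(ζ) dm(ζ)`: expand either factor and use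
the orthogonality of the other one. -/
lemma circInt_pow_conjTranspose_mul_eq_szHR (hw : Continuous w) (hPR1 : IsSzPR1 N w PR1)
    (hPR2 : IsSzPR2 N w PR2) (m : ℕ) :
    circInt N (fun ζ => ζ ^ m • ((mPolyEval (PR2 m) m ζ)ᴴ * w ζ)) = szHR N w PR1 m := by
  have hright : circInt N (fun ζ => (mPolyEval (PR2 m) m ζ)ᴴ * w ζ * mPolyEval (PR1 m) m ζ) =
      circInt N (fun ζ => ζ ^ m • ((mPolyEval (PR2 m) m ζ)ᴴ * w ζ)) := by
    rw [circInt_mul_mPolyEval _ _ (by fun_prop),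
      Finset.sum_eq_single_of_mem m (Finset.self_mem_range_succ m), (hPR1 m).1, Matrix.mul_one]
    intro k hk hkm
    rw [(hPR2 m).2.2 k (by have := Finset.mem_range.mp hk; omega), Matrix.zero_mul]
  have hleft : circInt N (fun ζ => (mPolyEval (PR2 m) m ζ)ᴴ * w ζ * mPolyEval (PR1 m) m ζ) =
      szHR N w PR1 m := by
    simp only [Matrix.mul_assoc]
    rw [circInt_conjTranspose_mPolyEval_mul _ _ (by fun_prop),
      Finset.sum_eq_single_of_mem m (Finset.self_mem_range_succ m), (hPR2 m).1,
      conjTranspose_one, Matrix.one_mul, szHR]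
    intro k hk hkm
    rw [(hPR1 m).2.2 k (by have := Finset.mem_range.mp hk; omega), Matrix.mul_zero]
  rw [← hright, hleft]

lemma IsSzPR1.isUnit_szHR (hPR1 : IsSzPR1 N w PR1) (hw : Continuous w) (hqd : QuasiDef N w)
    (m : ℕ) :
    IsUnit (szHR N w PR1 m) := by
  suffices h : ∀ v, szHR N w PR1 m *ᵥ v = 0 → v = 0 by
    refine mulVec_injective_iff_isUnit.mp fun v v' hvv' => sub_eq_zero.mp (h _ ?_)
    rw [mulVec_sub, hvv', sub_self]
  intro v hv
  have hcoeff := eq_zero_of_sum_mMoment_mulVec_eq_zero hqd (n := m + 1)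
    (v := fun i => PR1 m i *ᵥ v) fun j hj => by
      simp only [mulVec_mulVec, ← sum_mulVec]
      rw [← circInt_zpow_mul_mPolyEval hw]
      rcases Nat.lt_succ_iff_lt_or_eq.mp hj with hjm | rfl
      · rw [(hPR1 m).2.2 j hjm, zero_mulVec]
      · exact hv
  simpa [(hPR1 m).1] using hcoeff m m.lt_succ_self

lemma circInt_zpow_mRecipEval_mul (c : ℕ → Matrix (Fin N) (Fin N) ℂ) {m j : ℕ} (hj : j ≤ m) :
    circInt N (fun ζ => ζ ^ (-(j : ℤ)) • (mRecipEval c m ζ * w ζ)) =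
      circInt N (fun ζ => ζ ^ (m - j) • ((mPolyEval c m ζ)ᴴ * w ζ)) :=
  circInt_congr fun θ => by
    rw [mRecipEval_exp_mul_I, smul_mul_assoc, smul_smul, ← zpow_natCast,
      ← zpow_add₀ (exp_ne_zero _), ← zpow_natCast, Nat.cast_sub hj, neg_add_eq_sub]

theorem IsSzPL1.mPolyEval_succ (hPL1 : IsSzPL1 N w PL1) (hw : Continuous w)
    (hqd : QuasiDef N w) (hPR2 : IsSzPR2 N w PR2) (m : ℕ) (z : ℂ) :
    mPolyEval (PL1 (m + 1)) (m + 1) z =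
      z • mPolyEval (PL1 m) m z + szVer PL1 (m + 1) * mRecipEval (PR2 m) m z := by
  set α := szVer PL1 (m + 1)
  set d : ℕ → Matrix (Fin N) (Fin N) ℂ := fun k => PL1 (m + 1) k -
    (if k = 0 then 0 else PL1 m (k - 1)) - α * (if k ≤ m then (PR2 m (m - k))ᴴ else 0)
  have hd (ζ : ℂ) : mPolyEval d (1 + m) ζ = mPolyEval (PL1 (m + 1)) (m + 1) ζ -
      ζ • mPolyEval (PL1 m) m ζ - α * mRecipEval (PR2 m) m ζ := by
    rw [add_comm, mPolyEval_sub, mPolyEval_sub, mPolyEval_mul_left, ← smul_mPolyEval,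
      ← mRecipEval_eq_mPolyEval_succ]
  have hlow : ∀ k < 1, d k = 0 := by
    intro k hk
    obtain rfl : k = 0 := by omega
    simp [d, α, szVer_eq, (hPR2 m).1]
  have htop : d (1 + m) = 0 := by
    simp [d, add_comm 1 m, (hPL1 (m + 1)).1, (hPL1 m).1]
  have horth : ∀ j < m,
      circInt N (fun ζ => ζ ^ (-((1 + j : ℕ) : ℤ)) • (mPolyEval d (1 + m) ζ * w ζ)) = 0 := by
    intro j hj
    simp only [hd]
    rw [add_comm 1 j, circInt_congr (g := fun ζ =>
      ζ ^ (-((j + 1 : ℕ) : ℤ)) • (mPolyEval (PL1 (m + 1)) (m + 1) ζ * w ζ) -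
        ζ ^ (-(j : ℤ)) • (mPolyEval (PL1 m) m ζ * w ζ) -
        α * (ζ ^ (-((j + 1 : ℕ) : ℤ)) • (mRecipEval (PR2 m) m ζ * w ζ))) fun θ => ?_,
      circInt_sub (by fun_prop) (by fun_prop), circInt_sub (by fun_prop) (by fun_prop),
      circInt_mul_left _ (by fun_prop), (hPL1 (m + 1)).2.2 (j + 1) (by omega), (hPL1 m).2.2 j hj,
      circInt_zpow_mRecipEval_mul _ (by omega), (hPR2 m).2.2 _ (by omega)]
    · simp
    · simp only [sub_mul, smul_sub, smul_mul_assoc, mul_smul_comm, smul_smul, Matrix.mul_assoc,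
        Nat.cast_succ, zpow_neg_add_one_mul_self (exp_ne_zero _)]
  have h := mPolyEval_eq_zero_of_orthogonal hw hqd hlow htop horth z
  rwa [hd, sub_sub, sub_eq_zero] at h

theorem IsSzPR2.mRecipEval_succ (hPR2 : IsSzPR2 N w PR2) (hw : Continuous w)
    (hqd : QuasiDef N w) (hPL1 : IsSzPL1 N w PL1) (hPR1 : IsSzPR1 N w PR1) (m : ℕ) (z : ℂ) :
    mRecipEval (PR2 (m + 1)) (m + 1) z =
      (szVer PR2 (m + 1))ᴴ * mPolyEval (PL1 (m + 1)) (m + 1) z +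
        (szHR N w PR1 (m + 1) * (szHR N w PR1 m)⁻¹) * mRecipEval (PR2 m) m z := by
  set β := szVer PR2 (m + 1)
  set C := szHR N w PR1 (m + 1) * (szHR N w PR1 m)⁻¹
  set d : ℕ → Matrix (Fin N) (Fin N) ℂ := fun k => (PR2 (m + 1) (m + 1 - k))ᴴ -
    βᴴ * PL1 (m + 1) k - C * (if k ≤ m then (PR2 m (m - k))ᴴ else 0)
  have hd (ζ : ℂ) : mPolyEval d (0 + (m + 1)) ζ = mRecipEval (PR2 (m + 1)) (m + 1) ζ -
      βᴴ * mPolyEval (PL1 (m + 1)) (m + 1) ζ - C * mRecipEval (PR2 m) m ζ := by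
    rw [zero_add, mPolyEval_sub, mPolyEval_sub, mPolyEval_mul_left, mPolyEval_mul_left,
      ← mRecipEval_eq_mPolyEval_succ]
    rfl
  have htop : d (0 + (m + 1)) = 0 := by
    simp [d, β, szVer_eq, (hPL1 (m + 1)).1]
  have horth : ∀ j < m + 1, circInt N
      (fun ζ => ζ ^ (-((0 + j : ℕ) : ℤ)) • (mPolyEval d (0 + (m + 1)) ζ * w ζ)) = 0 := by
    intro j hj
    simp only [hd]
    rw [zero_add, circInt_congr (g := fun ζ =>
      ζ ^ (-(j : ℤ)) • (mRecipEval (PR2 (m + 1)) (m + 1) ζ * w ζ) -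
        βᴴ * (ζ ^ (-(j : ℤ)) • (mPolyEval (PL1 (m + 1)) (m + 1) ζ * w ζ)) -
        C * (ζ ^ (-(j : ℤ)) • (mRecipEval (PR2 m) m ζ * w ζ))) fun θ => ?_,
      circInt_sub (by fun_prop) (by fun_prop), circInt_sub (by fun_prop) (by fun_prop),
      circInt_mul_left _ (by fun_prop), circInt_mul_left _ (by fun_prop), (hPL1 (m + 1)).2.2 j hj,
      circInt_zpow_mRecipEval_mul _ hj.le, circInt_zpow_mRecipEval_mul _ (by omega : j ≤ m)]
    · rcases Nat.eq_zero_or_pos j with rfl | hj0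
      · have hH := (isUnit_iff_isUnit_det _).mp (hPR1.isUnit_szHR hw hqd m)
        simp only [Nat.sub_zero, circInt_pow_conjTranspose_mul_eq_szHR hw hPR1 hPR2, C,
          Matrix.mul_assoc, nonsing_inv_mul _ hH, Matrix.mul_zero, Matrix.mul_one, sub_zero,
          sub_self]
      · rw [(hPR2 (m + 1)).2.2 _ (by omega), (hPR2 m).2.2 _ (by omega)]
        simp
    · simp only [sub_mul, smul_sub, mul_smul_comm, Matrix.mul_assoc]
  have h := mPolyEval_eq_zero_of_orthogonal hw hqd (fun k hk => absurd hk k.not_lt_zero) htop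
    horth z
  rwa [hd, sub_sub, sub_eq_zero] at h

end Szego

section CauchyTransform

variable {N : ℕ} {w : ℂ → Matrix (Fin N) (Fin N) ℂ}
  {PL1 PR1 PR2 : ℕ → ℕ → Matrix (Fin N) (Fin N) ℂ}
  {z : ℂ}

theorem szQL1_succ (hw : Continuous w) (hqd : QuasiDef N w) (hPL1 : IsSzPL1 N w PL1)
    (hPR2 : IsSzPR2 N w PR2) (hz : ‖z‖ ≠ 1) (m : ℕ) :
    szQL1 N w PL1 (m + 1) z = szQL1 N w PL1 m z + szVer PL1 (m + 1) * szQR2 N w PR2 m z := by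
  have hK := continuous_cauchyKernel hz
  rw [szQL1, szQL1, szQR2, ← circInt_mul_left _ (by fun_prop),
    ← circInt_add (by fun_prop) (by fun_prop)]
  refine circInt_congr fun θ => ?_
  rw [hPL1.mPolyEval_succ hw hqd hPR2]
  simp only [add_mul, smul_add, smul_mul_assoc, mul_smul_comm, smul_smul, Matrix.mul_assoc,
    mul_right_comm _ _ (exp (θ * I)), Nat.cast_succ, zpow_neg_add_one_mul_self (exp_ne_zero _)]

lemma smul_szQR2 (hw : Continuous w) (hz : ‖z‖ ≠ 1) (P : ℕ → ℕ → Matrix (Fin N) (Fin N) ℂ)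
    (n : ℕ) : z • szQR2 N w P n z =
      circInt N (fun ζ => (ζ ^ (-(n : ℤ)) * (1 - ζ⁻¹ * z)⁻¹) • (mRecipEval (P n) n ζ * w ζ)) -
        circInt N (fun ζ => ζ ^ (-(n : ℤ)) • (mRecipEval (P n) n ζ * w ζ)) := by
  have hK := continuous_cauchyKernel hz
  rw [szQR2, ← circInt_smul, ← circInt_sub (by fun_prop) (by fun_prop)]
  refine circInt_congr fun θ => ?_
  rw [smul_smul, mul_zpow_mul_cauchyKernel (exp_ne_zero _) (one_sub_inv_mul_ne_zero hz θ), sub_smul]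

theorem szQR2_succ (hw : Continuous w) (hqd : QuasiDef N w) (hPL1 : IsSzPL1 N w PL1)
    (hPR1 : IsSzPR1 N w PR1) (hPR2 : IsSzPR2 N w PR2) (hz : ‖z‖ ≠ 1) (m : ℕ) :
    z • szQR2 N w PR2 (m + 1) z = (szVer PR2 (m + 1))ᴴ * szQL1 N w PL1 (m + 1) z +
      (szHR N w PR1 (m + 1) * (szHR N w PR1 m)⁻¹) * szQR2 N w PR2 m z := by
  have hK := continuous_cauchyKernel hz
  rw [smul_szQR2 hw hz, circInt_zpow_mRecipEval_mul _ le_rfl, Nat.sub_self,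
    (hPR2 (m + 1)).2.2 0 m.succ_pos, sub_zero, szQL1, szQR2, ← circInt_mul_left _ (by fun_prop),
    ← circInt_mul_left _ (by fun_prop), ← circInt_add (by fun_prop) (by fun_prop)]
  refine circInt_congr fun θ => ?_
  rw [hPR2.mRecipEval_succ hw hqd hPL1 hPR1]
  simp only [add_mul, smul_add, mul_smul_comm, Matrix.mul_assoc, Nat.cast_succ]

theorem szQL1_zero_sub_smul_szQR2_zero (hw : Continuous w) (hPL1 : IsSzPL1 N w PL1)
    (hPR1 : IsSzPR1 N w PR1) (hPR2 : IsSzPR2 N w PR2) (hz : ‖z‖ ≠ 1) :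
    szQL1 N w PL1 0 z - z • szQR2 N w PR2 0 z = szHR N w PR1 0 := by
  have hP (c : ℕ → Matrix (Fin N) (Fin N) ℂ) (hc : c 0 = 1) (ζ : ℂ) : mPolyEval c 0 ζ = 1 := by
    simp [mPolyEval, hc]
  have hR (ζ : ℂ) : mRecipEval (PR2 0) 0 ζ = 1 := by
    simp [mRecipEval, (hPR2 0).1]
  rw [smul_szQR2 hw hz]
  simp only [szQL1, szHR, hP _ (hPL1 0).1, hP _ (hPR1 0).1, hR, Matrix.one_mul, Matrix.mul_one,
    sub_sub_cancel]

end CauchyTransform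

section SzegoMatrix

variable {n : Type*} [Fintype n] [DecidableEq n] {𝕜 : Type*} [Field 𝕜]

lemma fromBlocks_mul_fromBlocks_smul_one (A B C D : Matrix n n 𝕜) (z : 𝕜) :
    fromBlocks A B C D * fromBlocks (z • 1) 0 0 1 = fromBlocks (z • A) B (z • C) D := by
  simp [fromBlocks_multiply]

variable [Star 𝕜]

/-- `szegoMatrix α^L_{1,k+1} α^R_{2,k} H^R_k z` is the Szegő matrix `R_k(z)`. -/
def szegoMatrix (α β H : Matrix n n 𝕜) (z : 𝕜) : Matrix (n ⊕ n) (n ⊕ n) 𝕜 :=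
  fromBlocks (1 + z⁻¹ • (α * βᴴ)) (-(z⁻¹ • (α * H))) (-(z⁻¹ • (H⁻¹ * βᴴ))) (z⁻¹ • 1)

lemma szegoMatrix_mul_fromBlocks {α β H P Pt Q Qt L K : Matrix n n 𝕜} {z : 𝕜} (hz : z ≠ 0)
    (hH : H⁻¹ * H = 1) (hL : H * L = z • (βᴴ * P - Pt)) (hK : H * K = βᴴ * Q - z • Qt) :
    szegoMatrix α β H z * fromBlocks (z • P) Q L K =
      fromBlocks (z • P + α * Pt) (Q + α * Qt) (-(H⁻¹ * Pt)) (-(H⁻¹ * Qt)) := by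
  have hL' : L = z • (H⁻¹ * (βᴴ * P - Pt)) := by
    rw [← mul_smul_comm, ← hL, ← Matrix.mul_assoc, hH, Matrix.one_mul]
  have hK' : K = H⁻¹ * (βᴴ * Q - z • Qt) := by
    rw [← hK, ← Matrix.mul_assoc, hH, Matrix.one_mul]
  rw [szegoMatrix, fromBlocks_multiply, fromBlocks_inj]
  refine ⟨?_, ?_, ?_, ?_⟩
  · simp only [add_mul, Matrix.one_mul, neg_mul, smul_mul_assoc, mul_smul_comm, Matrix.mul_assoc,
      hL, mul_sub, smul_add, smul_sub, smul_smul, mul_inv_cancel₀ hz, inv_mul_cancel₀ hz, one_smul]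
    abel
  · simp only [add_mul, Matrix.one_mul, neg_mul, smul_mul_assoc, mul_smul_comm, Matrix.mul_assoc,
      hK, mul_sub, smul_sub, smul_smul, inv_mul_cancel₀ hz, one_smul]
    abel
  · simp only [hL', neg_mul, smul_mul_assoc, mul_smul_comm, Matrix.one_mul, Matrix.mul_assoc,
      mul_sub, smul_neg, smul_sub, smul_smul, mul_inv_cancel₀ hz, one_smul]
    abel
  · simp only [hK', neg_mul, smul_mul_assoc, mul_smul_comm, Matrix.one_mul, Matrix.mul_assoc,
      mul_sub, smul_smul, mul_inv_cancel₀ hz, one_smul]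
    abel

end SzegoMatrix

section TransferFormula

variable {N : ℕ} {w : ℂ → Matrix (Fin N) (Fin N) ℂ}
  {PL1 PR1 PR2 : ℕ → ℕ → Matrix (Fin N) (Fin N) ℂ}
  {z : ℂ}

theorem fromBlocks_szego_eq_prod_szegoMatrix_mul (hw : Continuous w) (hqd : QuasiDef N w)
    (hPL1 : IsSzPL1 N w PL1) (hPR1 : IsSzPR1 N w PR1) (hPR2 : IsSzPR2 N w PR2) (hz : z ≠ 0)
    (hz1 : ‖z‖ ≠ 1) (m : ℕ) :
    fromBlocks (mPolyEval (PL1 (m + 1)) (m + 1) z) (szQL1 N w PL1 (m + 1) z)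
        (-((szHR N w PR1 m)⁻¹ * mRecipEval (PR2 m) m z))
        (-((szHR N w PR1 m)⁻¹ * szQR2 N w PR2 m z)) =
      ((List.range (m + 1)).reverse.map fun k =>
          szegoMatrix (szVer PL1 (k + 1)) (szVer PR2 k) (szHR N w PR1 k) z).prod *
        fromBlocks (z ^ (m + 1) • 1) (circInt N fun ζ => (1 - ζ⁻¹ * z)⁻¹ • w ζ) 0 1 := by
  have hH (k : ℕ) : (szHR N w PR1 k)⁻¹ * szHR N w PR1 k = 1 :=
    nonsing_inv_mul _ ((isUnit_iff_isUnit_det _).mp (hPR1.isUnit_szHR hw hqd k))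
  induction m with
  | zero =>
    have hP0 : mPolyEval (PL1 0) 0 z = 1 := by simp [mPolyEval, (hPL1 0).1]
    have hR0 : mRecipEval (PR2 0) 0 z = 1 := by simp [mRecipEval, (hPR2 0).1]
    have hQ0 : szQL1 N w PL1 0 z = circInt N fun ζ => (1 - ζ⁻¹ * z)⁻¹ • w ζ :=
      circInt_congr fun θ => by simp [mPolyEval, (hPL1 0).1]
    rw [hPL1.mPolyEval_succ hw hqd hPR2, szQL1_succ hw hqd hPL1 hPR2 hz1,
      ← szegoMatrix_mul_fromBlocks hz (hH 0) (β := szVer PR2 0) (L := 0) (K := 1)]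
    · simp [hP0, hQ0]
    · simp [szVer_eq, (hPR2 0).1, hP0, hR0]
    · rw [Matrix.mul_one, szVer_eq, (hPR2 0).1, conjTranspose_one, Matrix.one_mul,
        szQL1_zero_sub_smul_szQR2_zero hw hPL1 hPR1 hPR2 hz1]
  | succ m ih =>
    rw [hPL1.mPolyEval_succ hw hqd hPR2 (m + 1), szQL1_succ hw hqd hPL1 hPR2 hz1 (m + 1),
      ← szegoMatrix_mul_fromBlocks hz (hH (m + 1)) (β := szVer PR2 (m + 1))
        (L := z • -((szHR N w PR1 m)⁻¹ * mRecipEval (PR2 m) m z))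
        (K := -((szHR N w PR1 m)⁻¹ * szQR2 N w PR2 m z)),
      ← fromBlocks_mul_fromBlocks_smul_one, ih, List.range_succ (n := m + 1), List.reverse_append]
    · simp only [List.reverse_singleton, List.singleton_append, List.map_cons, List.prod_cons,
        Matrix.mul_assoc, fromBlocks_mul_fromBlocks_smul_one, smul_smul, ← pow_succ', smul_zero]
    · rw [hPR2.mRecipEval_succ hw hqd hPL1 hPR1]
      simp only [mul_smul_comm, mul_neg, Matrix.mul_assoc, sub_add_cancel_left, smul_neg]
    · rw [szQR2_succ hw hqd hPL1 hPR1 hPR2 hz1]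
      simp only [mul_neg, Matrix.mul_assoc, sub_add_cancel_left]

end TransferFormula

theorem statement9_general {N : ℕ} (w : ℂ → Matrix (Fin N) (Fin N) ℂ)
    (hw : Continuous w) (hqd : QuasiDef N w)
    (PL1 PR1 PR2 : ℕ → ℕ → Matrix (Fin N) (Fin N) ℂ)
    (hPL1 : IsSzPL1 N w PL1) (hPR1 : IsSzPR1 N w PR1) (hPR2 : IsSzPR2 N w PR2) :
    ∀ n : ℕ, 1 ≤ n → ∀ z : ℂ, z ≠ 0 → ‖z‖ ≠ 1 →
      Matrix.fromBlocks
          (mPolyEval (PL1 n) n z) (szQL1 N w PL1 n z)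
          (-((szHR N w PR1 (n-1))⁻¹ * mRecipEval (PR2 (n-1)) (n-1) z))
          (-((szHR N w PR1 (n-1))⁻¹ * szQR2 N w PR2 (n-1) z)) =
        (((List.range n).reverse.map fun k =>
            Matrix.fromBlocks
              (1 + z⁻¹ • (szVer PL1 (k+1) * (szVer PR2 k)ᴴ))
              (-(z⁻¹ • (szVer PL1 (k+1) * szHR N w PR1 k)))
              (-(z⁻¹ • ((szHR N w PR1 k)⁻¹ * (szVer PR2 k)ᴴ)))
              (z⁻¹ • (1 : Matrix (Fin N) (Fin N) ℂ))).prod) *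
          Matrix.fromBlocks (z ^ n • 1) (circInt N fun ζ => (1 - ζ⁻¹ * z)⁻¹ • w ζ) 0 1 := by
  intro n hn z hz hz1
  obtain ⟨m, rfl⟩ := Nat.exists_eq_add_of_le' hn
  exact fromBlocks_szego_eq_prod_szegoMatrix_mul hw hqd hPL1 hPR1 hPR2 hz hz1 m

/-- the transfer-matrix formula expressing the Riemann–Hilbert matrix
`Y_n(z)` as the ordered product of the Szegő matrices `R_{n-1}(z) ⋯ R_0(z)` applied to
the initial data. -/
theorem statement9 {N : ℕ} (hN : 1 ≤ N) (w : ℂ → Matrix (Fin N) (Fin N) ℂ)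
    (hw : Continuous w) (hqd : QuasiDef N w)
    (PL1 PR1 PR2 : ℕ → ℕ → Matrix (Fin N) (Fin N) ℂ)
    (hPL1 : IsSzPL1 N w PL1) (hPR1 : IsSzPR1 N w PR1) (hPR2 : IsSzPR2 N w PR2) :
    ∀ n : ℕ, 1 ≤ n → ∀ z : ℂ, z ≠ 0 → ‖z‖ ≠ 1 →
      Matrix.fromBlocks
          (mPolyEval (PL1 n) n z) (szQL1 N w PL1 n z)
          (-((szHR N w PR1 (n-1))⁻¹ * mRecipEval (PR2 (n-1)) (n-1) z))
          (-((szHR N w PR1 (n-1))⁻¹ * szQR2 N w PR2 (n-1) z)) =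
        (((List.range n).reverse.map fun k =>
            Matrix.fromBlocks
              (1 + z⁻¹ • (szVer PL1 (k+1) * (szVer PR2 k)ᴴ))
              (-(z⁻¹ • (szVer PL1 (k+1) * szHR N w PR1 k)))
              (-(z⁻¹ • ((szHR N w PR1 k)⁻¹ * (szVer PR2 k)ᴴ)))
              (z⁻¹ • (1 : Matrix (Fin N) (Fin N) ℂ))).prod) *
          Matrix.fromBlocks (z ^ n • 1) (circInt N fun ζ => (1 - ζ⁻¹ * z)⁻¹ • w ζ) 0 1 :=
  statement9_general w hw hqd PL1 PR1 PR2 hPL1 hPR1 hPR2
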